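/- Strong law of large numbers for p > 2 with general weights: let (Ω, ℱ, μ) be a probability space with a filtration (ℱ_n)_{n ≥ 1}, let p > 2 be a real number, and let (Y_n)_{n ≥ 1} be a martingale difference sequence with respect to (ℱ_n) such that each |Y_n|^p is integrable. Let (a_n)_{n ≥ 1} be a non-decreasing sequence of positive real numbers, and let k > 0 and γ be real numbers with Σ_{i=1}^∞ 1/a_i^k < ∞ and p ≥ γ + (p/2 − 1)·k. If Σ_{i=1}^∞ E[|Y_i|^p] / a_i^γ < ∞, then (1/a_n) · Σ_{i=1}^n Y_i → 0 almost everywhere as n → ∞. -/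

import Mathlib

/-!
Put `Z i = Y i / a i`. Splitting according to whether `(|y|/B)^(p-2) B^(p-γ)` is at least `1`
gives `(y/B)^2 ≤ |y|^p / B^γ + B^((2γ - 2p)/(p - 2))`, and the hypothesis `γ + (p/2 - 1)k ≤ p`
says exactly that the last exponent is at most `-k`. Hence `∑ E[Z i ^ 2] < ∞`. The partial sums
of `Z` form a martingale with orthogonal increments, so they are bounded in `L²`, hence in `L¹`,
and converge almost surely. Kronecker's lemma turns this into `(1/a n) ∑ Y i → 0`.
-/

open MeasureTheory Filter Topology Finset Asymptotics Real

theorem tendsto_sum_mul_div_sum_of_tendsto {g v : ℕ → ℝ} {L : ℝ} (hg : 0 ≤ g)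
    (hgtop : Tendsto (fun n => ∑ i ∈ range n, g i) atTop atTop) (hv : Tendsto v atTop (𝓝 L)) :
    Tendsto (fun n => (∑ i ∈ range n, g i * v i) / ∑ i ∈ range n, g i) atTop (𝓝 L) := by
  have hsmall : (fun i => g i * (v i - L)) =o[atTop] g := by
    simpa using (isBigO_refl g atTop).mul_isLittleO
      ((isLittleO_one_iff ℝ).2 (by simpa using hv.sub_const L))
  have hdiv := ((hsmall.sum_range hg hgtop).tendsto_div_nhds_zero).const_add L
  rw [add_zero] at hdiv
  refine hdiv.congr' ?_
  filter_upwards [hgtop.eventually_gt_atTop 0] with n hn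
  simp only [mul_sub, sum_sub_distrib, ← sum_mul]
  field_simp
  ring

/-- **Kronecker's lemma**. -/
theorem tendsto_inv_mul_sum_mul_of_tendsto_sum {b u : ℕ → ℝ} {L : ℝ} (hb : Monotone b)
    (hbtop : Tendsto b atTop atTop) (hu : Tendsto (fun n => ∑ i ∈ range n, u i) atTop (𝓝 L)) :
    Tendsto (fun n => (b n)⁻¹ * ∑ i ∈ range (n + 1), b i * u i) atTop (𝓝 0) := by
  set S := fun n => ∑ i ∈ range n, u i
  have hgsum : ∀ n, ∑ i ∈ range n, (b (i + 1) - b i) = b n - b 0 := sum_range_sub b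
  have hS : Tendsto (fun n => S (n + 1)) atTop (𝓝 L) := hu.comp (tendsto_add_atTop_nat 1)
  have hmean : Tendsto (fun n => (∑ i ∈ range n, (b (i + 1) - b i) * S (i + 1)) / (b n - b 0))
      atTop (𝓝 L) := by
    have hgtop : Tendsto (fun n => ∑ i ∈ range n, (b (i + 1) - b i)) atTop atTop := by
      simp only [hgsum]
      simpa only [sub_eq_add_neg] using tendsto_atTop_add_const_right _ (-b 0) hbtop
    simpa only [hgsum] using
      tendsto_sum_mul_div_sum_of_tendsto (fun i => sub_nonneg.2 (hb (Nat.le_succ i))) hgtop hS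
  have hratio : Tendsto (fun n => (b n - b 0) / b n) atTop (𝓝 1) := by
    have h : Tendsto (fun n => 1 - b 0 * (b n)⁻¹) atTop (𝓝 1) := by
      simpa using tendsto_const_nhds.sub ((tendsto_inv_atTop_zero.comp hbtop).const_mul (b 0))
    refine h.congr' ?_
    filter_upwards [hbtop.eventually_gt_atTop 0] with n hn
    field_simp
  have habel : ∀ᶠ n in atTop, S (n + 1) - (b n - b 0) / b n *
      ((∑ i ∈ range n, (b (i + 1) - b i) * S (i + 1)) / (b n - b 0))
      = (b n)⁻¹ * ∑ i ∈ range (n + 1), b i * u i := by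
    filter_upwards [hbtop.eventually_gt_atTop 0, hbtop.eventually_gt_atTop (b 0)] with n hn hn0
    have hparts := sum_range_by_parts b u (n + 1)
    simp only [smul_eq_mul, Nat.add_sub_cancel] at hparts
    rw [hparts]
    field_simp
    ring
  simpa using (hS.sub (hratio.mul hmean)).congr' habel

theorem tendsto_atTop_of_summable_one_div_rpow {b : ℕ → ℝ} {k : ℝ} (hk : 0 < k)
    (hb : ∀ n, 0 < b n) (h : Summable fun n => 1 / b n ^ k) : Tendsto b atTop atTop := by
  have hinv : Tendsto (fun n => (b n ^ k)⁻¹) atTop (𝓝[>] 0) :=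
    tendsto_nhdsWithin_iff.2 ⟨by simpa using h.tendsto_atTop_zero,
      Eventually.of_forall fun n => Set.mem_Ioi.2 (by have := hb n; positivity)⟩
  have hpow : Tendsto (fun n => b n ^ k) atTop atTop := by
    simpa only [Pi.inv_def, inv_inv] using hinv.inv_tendsto_nhdsGT_zero
  refine ((tendsto_rpow_atTop (inv_pos.2 hk)).comp hpow).congr fun n => ?_
  exact rpow_rpow_inv (hb n).le hk.ne'

theorem summable_rpow_of_summable_one_div_rpow {b : ℕ → ℝ} {k e : ℝ}
    (hbtop : Tendsto b atTop atTop) (h : Summable fun n => 1 / b n ^ k) (he : e ≤ -k) :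
    Summable fun n => b n ^ e := by
  refine h.of_norm_bounded_eventually_nat ?_
  filter_upwards [hbtop.eventually_ge_atTop 1] with n hn
  rw [norm_of_nonneg (by positivity), one_div, ← rpow_neg (by positivity)]
  exact rpow_le_rpow_of_exponent_le hn he

theorem sq_inv_mul_le_rpow_div_add_rpow {p γ B : ℝ} (hp : 2 < p) (hB : 0 < B) (y : ℝ) :
    (B⁻¹ * y) ^ 2 ≤ |y| ^ p / B ^ γ + B ^ ((2 * γ - 2 * p) / (p - 2)) := by
  set s := |y| / B
  have hs : 0 ≤ s := by positivity
  have hsq : (B⁻¹ * y) ^ 2 = s ^ (2 : ℝ) := by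
    rw [rpow_two, div_pow, sq_abs, mul_pow, inv_pow, inv_mul_eq_div]
  have hfirst : |y| ^ p / B ^ γ = s ^ (2 : ℝ) * (s ^ (p - 2) * B ^ (p - γ)) := by
    have hy : |y| = s * B := (div_mul_cancel₀ _ hB.ne').symm
    rw [hy, mul_rpow hs hB.le, rpow_sub hB, ← mul_assoc, ← rpow_add' hs (by linarith)]
    ring_nf
  by_cases hbig : 1 ≤ s ^ (p - 2) * B ^ (p - γ)
  · rw [hsq, hfirst]
    exact le_add_of_le_of_nonneg (le_mul_of_one_le_right (by positivity) hbig) (by positivity)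
  · have hsmall : s ^ (p - 2) ≤ B ^ (γ - p) := by
      rw [show γ - p = -(p - γ) by ring, rpow_neg hB.le, ← one_div, le_div_iff₀ (by positivity)]
      linarith
    have hp2 : p - 2 ≠ 0 := by linarith
    calc (B⁻¹ * y) ^ 2 = (s ^ (p - 2)) ^ (2 / (p - 2)) := by
          rw [hsq, ← rpow_mul hs]; congr 1; field_simp
      _ ≤ (B ^ (γ - p)) ^ (2 / (p - 2)) :=
          rpow_le_rpow (by positivity) hsmall (div_nonneg zero_le_two (by linarith))
      _ = B ^ ((2 * γ - 2 * p) / (p - 2)) := by rw [← rpow_mul hB.le]; congr 1; ring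
      _ ≤ _ := le_add_of_nonneg_left (by positivity)

section Probability

variable {Ω : Type*} {m m0 : MeasurableSpace Ω} {μ : Measure Ω}

theorem memLp_of_integrable_abs_rpow [IsFiniteMeasure μ] {f : Ω → ℝ} {p : ℝ} {q : ENNReal}
    (hp : 0 < p) (hq : q ≤ ENNReal.ofReal p) (hf : AEStronglyMeasurable f μ)
    (hint : Integrable (fun ω => |f ω| ^ p) μ) : MemLp f q μ := by
  have hp0 : ENNReal.ofReal p ≠ 0 := by simpa using hp
  refine MemLp.mono_exponent ((memLp_norm_rpow_iff hf hp0 ENNReal.ofReal_ne_top).1 ?_) hq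
  rw [ENNReal.div_self hp0 ENNReal.ofReal_ne_top, memLp_one_iff_integrable,
    ENNReal.toReal_ofReal hp.le]
  simpa [Real.norm_eq_abs] using hint

theorem integral_sq_inv_mul_le [IsProbabilityMeasure μ] {p γ B : ℝ} (hp : 2 < p) (hB : 0 < B)
    {f : Ω → ℝ} (hf : Integrable (fun ω => |f ω| ^ p) μ) :
    ∫ ω, (B⁻¹ * f ω) ^ 2 ∂μ ≤ (∫ ω, |f ω| ^ p ∂μ) / B ^ γ + B ^ ((2 * γ - 2 * p) / (p - 2)) := by
  calc ∫ ω, (B⁻¹ * f ω) ^ 2 ∂μ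
      ≤ ∫ ω, (|f ω| ^ p / B ^ γ + B ^ ((2 * γ - 2 * p) / (p - 2))) ∂μ :=
        integral_mono_of_nonneg (Eventually.of_forall fun ω => sq_nonneg _)
          ((hf.div_const _).add (integrable_const _))
          (Eventually.of_forall fun ω => sq_inv_mul_le_rpow_div_add_rpow hp hB _)
    _ = _ := by
        rw [integral_add (hf.div_const _) (integrable_const _), integral_div]
        simp

def MeasureTheory.Filtration.shift (ℱ : Filtration ℕ m) (k : ℕ) : Filtration ℕ m where
  seq n := ℱ (n + k)
  mono' _ _ h := ℱ.mono (Nat.add_le_add_right h k)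
  le' n := ℱ.le (n + k)

theorem integral_add_sq_of_condExp_eq_zero [IsFiniteMeasure μ] (hm : m ≤ m0) {f g : Ω → ℝ}
    (hf : StronglyMeasurable[m] f) (hf2 : MemLp f 2 μ) (hg2 : MemLp g 2 μ)
    (hg : μ[g | m] =ᵐ[μ] 0) :
    ∫ ω, (f ω + g ω) ^ 2 ∂μ = ∫ ω, f ω ^ 2 ∂μ + ∫ ω, g ω ^ 2 ∂μ := by
  have hfg : Integrable (f * g) μ := hf2.integrable_mul hg2
  have hcross : ∫ ω, f ω * g ω ∂μ = 0 := by
    change ∫ ω, (f * g) ω ∂μ = 0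
    rw [← integral_condExp hm]
    refine (integral_congr_ae ?_).trans (integral_zero Ω ℝ)
    filter_upwards [condExp_mul_of_stronglyMeasurable_left hf hfg (hg2.integrable one_le_two), hg]
      with ω h1 h2
    simp [h1, h2]
  have hf2i := hf2.integrable_sq
  have hg2i := hg2.integrable_sq
  have hfg2 : Integrable (fun ω => 2 * (f ω * g ω)) μ := hfg.const_mul 2
  have hsum : Integrable (fun ω => f ω ^ 2 + 2 * (f ω * g ω)) μ := hf2i.add hfg2
  calc ∫ ω, (f ω + g ω) ^ 2 ∂μ = ∫ ω, (f ω ^ 2 + 2 * (f ω * g ω) + g ω ^ 2) ∂μ := by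
        congr with ω; ring
    _ = ∫ ω, f ω ^ 2 ∂μ + 2 * ∫ ω, f ω * g ω ∂μ + ∫ ω, g ω ^ 2 ∂μ := by
        rw [integral_add hsum hg2i, integral_add hf2i hfg2, integral_const_mul]
    _ = _ := by rw [hcross]; ring

theorem eLpNorm_one_le_sqrt_integral_sq [IsProbabilityMeasure μ] {f : Ω → ℝ}
    (hf : MemLp f 2 μ) : eLpNorm f 1 μ ≤ ENNReal.ofReal √(∫ ω, f ω ^ 2 ∂μ) := by
  refine (eLpNorm_le_eLpNorm_of_exponent_le one_le_two hf.1).trans_eq ?_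
  rw [hf.eLpNorm_eq_integral_rpow_norm two_ne_zero ENNReal.ofNat_ne_top, sqrt_eq_rpow]
  simp [one_div]

variable {ℱ : Filtration ℕ m0} {X : ℕ → Ω → ℝ}

theorem stronglyAdapted_sum_range_succ (hadp : StronglyAdapted ℱ X) :
    StronglyAdapted ℱ fun n ω => ∑ i ∈ range (n + 1), X i ω := fun _ =>
  Finset.stronglyMeasurable_fun_sum _ fun i hi =>
    (hadp i).mono (ℱ.mono (Nat.lt_succ_iff.1 (mem_range.1 hi)))

theorem martingale_sum_range_succ [IsFiniteMeasure μ] (hadp : StronglyAdapted ℱ X)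
    (hint : ∀ n, Integrable (X n) μ) (hmds : ∀ n, μ[X (n + 1) | ℱ n] =ᵐ[μ] 0) :
    Martingale (fun n ω => ∑ i ∈ range (n + 1), X i ω) ℱ μ := by
  refine martingale_of_condExp_sub_eq_zero_nat (stronglyAdapted_sum_range_succ hadp)
    (fun n => integrable_finsetSum _ fun i _ => hint i) fun n => ?_
  have hinc : (fun ω => ∑ i ∈ range (n + 1 + 1), X i ω) - (fun ω => ∑ i ∈ range (n + 1), X i ω)
      = X (n + 1) := by
    ext ω; exact sum_range_succ_sub_sum _
  rw [hinc]
  exact hmds n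

theorem integral_sq_sum_range_succ [IsFiniteMeasure μ] (hadp : StronglyAdapted ℱ X)
    (hX : ∀ n, MemLp (X n) 2 μ) (hmds : ∀ n, μ[X (n + 1) | ℱ n] =ᵐ[μ] 0) (n : ℕ) :
    ∫ ω, (∑ i ∈ range (n + 1), X i ω) ^ 2 ∂μ = ∑ i ∈ range (n + 1), ∫ ω, X i ω ^ 2 ∂μ := by
  induction n with
  | zero => simp
  | succ n ih =>
    simp_rw [sum_range_succ _ (n + 1)]
    rw [integral_add_sq_of_condExp_eq_zero (ℱ.le n) (stronglyAdapted_sum_range_succ hadp n)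
      (memLp_finsetSum _ fun i _ => hX i) (hX (n + 1)) (hmds n), ih]

theorem ae_exists_tendsto_sum_range_of_summable_integral_sq [IsProbabilityMeasure μ]
    (hadp : StronglyAdapted ℱ X) (hX : ∀ n, MemLp (X n) 2 μ)
    (hmds : ∀ n, μ[X (n + 1) | ℱ n] =ᵐ[μ] 0) (hsum : Summable fun n => ∫ ω, X n ω ^ 2 ∂μ) :
    ∀ᵐ ω ∂μ, ∃ c, Tendsto (fun n => ∑ i ∈ range n, X i ω) atTop (𝓝 c) := by
  set C := ∑' i, ∫ ω, X i ω ^ 2 ∂μ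
  have hbdd : ∀ n, eLpNorm (fun ω => ∑ i ∈ range (n + 1), X i ω) 1 μ ≤ ENNReal.ofReal √C :=
    fun n => by
    have hM : MemLp (fun ω => ∑ i ∈ range (n + 1), X i ω) 2 μ :=
      memLp_finsetSum _ fun i _ => hX i
    refine (eLpNorm_one_le_sqrt_integral_sq hM).trans ?_
    rw [integral_sq_sum_range_succ hadp hX hmds]
    exact ENNReal.ofReal_le_ofReal (sqrt_le_sqrt
      (hsum.sum_le_tsum _ fun i _ => integral_nonneg fun ω => sq_nonneg _))
  filter_upwards [(martingale_sum_range_succ hadp (fun n => (hX n).integrable one_le_two)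
    hmds).submartingale.exists_ae_tendsto_of_bdd (R := (√C).toNNReal) hbdd] with ω ⟨c, hc⟩
  exact ⟨c, (tendsto_add_atTop_iff_nat 1).1 hc⟩

theorem ae_tendsto_inv_mul_sum_range_of_summable_integral_sq [IsProbabilityMeasure μ]
    (hadp : StronglyAdapted ℱ X) (hX : ∀ n, MemLp (X n) 2 μ)
    (hmds : ∀ n, μ[X (n + 1) | ℱ n] =ᵐ[μ] 0) {b : ℕ → ℝ} (hbpos : ∀ n, 0 < b n)
    (hb : Monotone b) (hbtop : Tendsto b atTop atTop)
    (hsum : Summable fun n => ∫ ω, ((b n)⁻¹ * X n ω) ^ 2 ∂μ) :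
    ∀ᵐ ω ∂μ, Tendsto (fun n => (b n)⁻¹ * ∑ i ∈ range (n + 1), X i ω) atTop (𝓝 0) := by
  have hmds' : ∀ n, μ[fun ω => (b (n + 1))⁻¹ * X (n + 1) ω | ℱ n] =ᵐ[μ] 0 := fun n => by
    change μ[(b (n + 1))⁻¹ • X (n + 1) | ℱ n] =ᵐ[μ] 0
    filter_upwards [condExp_smul (b (n + 1))⁻¹ (X (n + 1)) (ℱ n), hmds n] with ω h1 h2
    simp [h1, h2]
  filter_upwards [ae_exists_tendsto_sum_range_of_summable_integral_sq
    (fun n => (hadp n).const_mul _) (fun n => (hX n).const_mul _) hmds' hsum] with ω ⟨c, hc⟩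
  refine (tendsto_inv_mul_sum_mul_of_tendsto_sum hb hbtop hc).congr fun n => ?_
  simp only [mul_inv_cancel_left₀ (hbpos _).ne']

end Probability

theorem strong_law_of_large_numbers_p_gt_two_weights_general
    {Ω : Type*} {m0 : MeasurableSpace Ω} {μ : Measure Ω} [IsProbabilityMeasure μ]
    (ℱ : Filtration ℕ m0) (p : ℝ) (hp : 2 < p) (Y : ℕ → Ω → ℝ)
    (hadp : ∀ n, 1 ≤ n → StronglyMeasurable[ℱ n] (Y n))
    (hmds : ∀ n, 2 ≤ n → μ[Y n | ℱ (n - 1)] =ᵐ[μ] 0)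
    (hYp : ∀ n, 1 ≤ n → Integrable (fun ω => |Y n ω| ^ p) μ)
    (a : ℕ → ℝ) (hapos : ∀ n, 1 ≤ n → 0 < a n)
    (hamono : ∀ i j, 1 ≤ i → i ≤ j → a i ≤ a j)
    (k γ : ℝ) (hk : 0 < k)
    (hak : Summable fun i : ℕ => 1 / a (i + 1) ^ k)
    (hγ : γ + (p / 2 - 1) * k ≤ p)
    (hsum : Summable fun i : ℕ => (∫ ω, |Y (i + 1) ω| ^ p ∂μ) / a (i + 1) ^ γ) :
    ∀ᵐ ω ∂μ, Tendsto (fun n => (a n)⁻¹ * ∑ i ∈ Finset.Icc 1 n, Y i ω) atTop (𝓝 0) := by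
  have ha : ∀ n, 0 < a (n + 1) := fun n => hapos _ (Nat.le_add_left 1 n)
  have hatop : Tendsto (fun n => a (n + 1)) atTop atTop :=
    tendsto_atTop_of_summable_one_div_rpow hk ha hak
  have he : (2 * γ - 2 * p) / (p - 2) ≤ -k := by
    rw [div_le_iff₀ (by linarith)]
    nlinarith
  have hY2 : ∀ n, MemLp (Y (n + 1)) 2 μ := fun n =>
    memLp_of_integrable_abs_rpow (by linarith) (by simpa using hp.le)
      ((hadp _ (Nat.le_add_left 1 n)).mono (ℱ.le _)).aestronglyMeasurable
      (hYp _ (Nat.le_add_left 1 n))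
  have hsumZ : Summable fun n => ∫ ω, ((a (n + 1))⁻¹ * Y (n + 1) ω) ^ 2 ∂μ :=
    Summable.of_nonneg_of_le (fun n => integral_nonneg fun ω => sq_nonneg _)
      (fun n => integral_sq_inv_mul_le hp (ha n) (hYp _ (Nat.le_add_left 1 n)))
      (hsum.add (summable_rpow_of_summable_one_div_rpow hatop hak he))
  -- `Y 1` need not be centred: shifting the filtration by one makes `Y (n + 1)` a martingale
  -- difference sequence from `n = 0` on.
  filter_upwards [ae_tendsto_inv_mul_sum_range_of_summable_integral_sq (ℱ := ℱ.shift 1)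
    (fun n => hadp _ (Nat.le_add_left 1 n)) hY2 (fun n => hmds (n + 2) (Nat.le_add_left 2 n))
    ha (fun i j hij => hamono _ _ (Nat.le_add_left 1 i) (by omega)) hatop hsumZ] with ω hω
  rw [← tendsto_add_atTop_iff_nat 1]
  refine hω.congr fun n => ?_
  rw [range_eq_Ico, sum_Ico_add' (Y · ω) 0 (n + 1) 1, zero_add, Ico_add_one_right_eq_Icc]

/-- Strong law of large numbers for `p > 2` with general weights. -/
theorem strong_law_of_large_numbers_p_gt_two_weights
    {Ω : Type*} {m0 : MeasurableSpace Ω} {μ : Measure Ω} [IsProbabilityMeasure μ]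
    (ℱ : Filtration ℕ m0) (p : ℝ) (hp : 2 < p) (Y : ℕ → Ω → ℝ)
    (hint : ∀ n, 1 ≤ n → Integrable (Y n) μ)
    (hadp : ∀ n, 1 ≤ n → StronglyMeasurable[ℱ n] (Y n))
    (hmds : ∀ n, 2 ≤ n → μ[Y n | ℱ (n - 1)] =ᵐ[μ] 0)
    (hYp : ∀ n, 1 ≤ n → Integrable (fun ω => |Y n ω| ^ p) μ)
    (a : ℕ → ℝ) (hapos : ∀ n, 1 ≤ n → 0 < a n)
    (hamono : ∀ i j, 1 ≤ i → i ≤ j → a i ≤ a j)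
    (k γ : ℝ) (hk : 0 < k)
    (hak : Summable fun i : ℕ => 1 / a (i + 1) ^ k)
    (hγ : γ + (p / 2 - 1) * k ≤ p)
    (hsum : Summable fun i : ℕ => (∫ ω, |Y (i + 1) ω| ^ p ∂μ) / a (i + 1) ^ γ) :
    ∀ᵐ ω ∂μ, Tendsto (fun n => (a n)⁻¹ * ∑ i ∈ Finset.Icc 1 n, Y i ω) atTop (𝓝 0) :=
  strong_law_of_large_numbers_p_gt_two_weights_general ℱ p hp Y hadp hmds hYp a hapos hamono k γ hk
    hak hγ hsum
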